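/- arXiv:2211.01832 — 3 statements merged into one kernel-verified Lean document; each statement's English description precedes it below -/
import Mathlib

section
/- For all non-negative real numbers a_1, ..., a_T with a_1 > 0, we have sqrt(sum_{t=1}^T a_t) <= sum_{t=1}^T a_t / sqrt(sum_{i=1}^t a_i) <= 2 * sqrt(sum_{t=1}^T a_t). -/
open Finset

lemma step_lower (S b : ℝ) (hS : 0 < S) (hb : 0 ≤ b) :
    Real.sqrt (S + b) ≤ Real.sqrt S + b / Real.sqrt (S + b) := by
  have hS' : 0 < S + b := by linarith
  have hs' : 0 < Real.sqrt (S + b) := Real.sqrt_pos.2 hS'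
  have key : Real.sqrt (S + b) - Real.sqrt S ≤ b / Real.sqrt (S + b) := by
    rw [le_div_iff₀ hs']
    nlinarith [Real.sq_sqrt hS'.le, Real.sq_sqrt hS.le, Real.sqrt_nonneg S,
      Real.sqrt_le_sqrt (by linarith : S ≤ S + b)]
  linarith

lemma step_upper (S b : ℝ) (hS : 0 < S) (hb : 0 ≤ b) :
    2 * Real.sqrt S + b / Real.sqrt (S + b) ≤ 2 * Real.sqrt (S + b) := by
  have hS' : 0 < S + b := by linarith
  have hs' : 0 < Real.sqrt (S + b) := Real.sqrt_pos.2 hS'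
  have h : b / Real.sqrt (S + b) ≤ 2 * (Real.sqrt (S + b) - Real.sqrt S) := by
    rw [div_le_iff₀ hs']
    nlinarith [Real.sq_sqrt hS'.le, Real.sq_sqrt hS.le, Real.sqrt_nonneg S,
      sq_nonneg (Real.sqrt (S + b) - Real.sqrt S)]
  linarith

theorem stmt0 (T : ℕ) (hT : 1 ≤ T) (a : ℕ → ℝ) (ha : ∀ t, 0 ≤ a t) (ha1 : 0 < a 1) :
    Real.sqrt (∑ t ∈ Icc 1 T, a t) ≤
      ∑ t ∈ Icc 1 T, a t / Real.sqrt (∑ i ∈ Icc 1 t, a i) ∧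
    ∑ t ∈ Icc 1 T, a t / Real.sqrt (∑ i ∈ Icc 1 t, a i) ≤
      2 * Real.sqrt (∑ t ∈ Icc 1 T, a t) := by
  induction T, hT using Nat.le_induction with
  | base =>
    simp only [Icc_self, sum_singleton]
    rw [Real.div_sqrt]
    exact ⟨le_refl _, by nlinarith [Real.sqrt_nonneg (a 1)]⟩
  | succ T hT ih =>
    have hins : Icc 1 (T + 1) = insert (T + 1) (Icc 1 T) := by
      exact (Finset.insert_Icc_right_eq_Icc_add_one (by omega)).symm
    have hnm : T + 1 ∉ Icc 1 T := by simp
    have hSpos : 0 < ∑ t ∈ Icc 1 T, a t := by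
      have := Finset.single_le_sum (f := a) (fun i _ => ha i)
        (Finset.mem_Icc.2 ⟨le_refl 1, hT⟩)
      linarith
    rw [hins, Finset.sum_insert hnm, Finset.sum_insert hnm]
    simp only [add_comm (a (T + 1))]
    rw [hins, Finset.sum_insert hnm, add_comm (a (T + 1))]
    have h1 := step_lower (∑ t ∈ Icc 1 T, a t) (a (T + 1)) hSpos (ha _)
    have h2 := step_upper (∑ t ∈ Icc 1 T, a t) (a (T + 1)) hSpos (ha _)
    exact ⟨by linarith [ih.1], by linarith [ih.2]⟩
end

section
/- Let (alpha_t)_{t>=1} be non-negative reals, gamma, G > 0, and define lambda_t = gamma / sqrt(G + sum_{s=1}^{t-1} alpha_s) (so lambda_t is non-increasing). Let K > 0 and define T_0 = max { t : K - 1/lambda_{t+1}^2 >= 0 } (assume T_0 is finite and positive). Then sum_{t=1}^T (K - 1/lambda_{t+1}^2) * lambda_{t+1} * alpha_t <= K * sum_{t=1}^{T_0} lambda_{t+1} * alpha_t <= 2 * K * gamma^2 / lambda_{T_0 + 1} <= 2 * K * gamma^2 * sqrt(K). -/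
open Finset

lemma stmt15_key (α : ℕ → ℝ) (hα : ∀ t, 0 ≤ α t) (G : ℝ) (hG : 0 < G) (n : ℕ) :
    ∑ t ∈ Icc 1 n, α t / Real.sqrt (G + ∑ s ∈ Icc 1 t, α s) ≤
      2 * Real.sqrt (G + ∑ s ∈ Icc 1 n, α s) := by
  induction n with
  | zero => simp
  | succ n ih =>
    have hS : (0:ℝ) ≤ ∑ s ∈ Icc 1 n, α s := Finset.sum_nonneg fun i _ => hα i
    have hSn : (0:ℝ) < G + ∑ s ∈ Icc 1 n, α s := by linarith
    have hSn1 : (0:ℝ) < G + ∑ s ∈ Icc 1 (n+1), α s := by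
      rw [Finset.sum_Icc_succ_top (by omega)]; have := hα (n+1); linarith
    set a := Real.sqrt (G + ∑ s ∈ Icc 1 (n+1), α s) with ha
    set b := Real.sqrt (G + ∑ s ∈ Icc 1 n, α s) with hb
    have ha2 : a ^ 2 = G + ∑ s ∈ Icc 1 (n+1), α s := Real.sq_sqrt hSn1.le
    have hb2 : b ^ 2 = G + ∑ s ∈ Icc 1 n, α s := Real.sq_sqrt hSn.le
    have hab : b ≤ a := by
      apply Real.sqrt_le_sqrt
      rw [Finset.sum_Icc_succ_top (by omega : 1 ≤ n + 1)]
      have := hα (n+1); linarith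
    have hbpos : 0 < b := Real.sqrt_pos.mpr hSn
    have hapos : 0 < a := lt_of_lt_of_le hbpos hab
    have hdiff : a ^ 2 - b ^ 2 = α (n+1) := by
      rw [ha2, hb2, Finset.sum_Icc_succ_top (by omega : 1 ≤ n + 1)]; ring
    have hstep : α (n+1) / a ≤ 2 * a - 2 * b := by
      rw [div_le_iff₀ hapos]; nlinarith
    rw [Finset.sum_Icc_succ_top (by omega : 1 ≤ n + 1)]
    linarith

theorem stmt15 (α : ℕ → ℝ) (hα : ∀ t, 0 ≤ α t) (γ G K : ℝ)
    (hγ : 0 < γ) (hG : 0 < G) (hK : 0 < K)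
    (lam : ℕ → ℝ)
    (hlam : ∀ t, lam t = γ / Real.sqrt (G + ∑ s ∈ Icc 1 (t - 1), α s))
    (T0 : ℕ) (hT0pos : 1 ≤ T0)
    (hT0a : 0 ≤ K - 1 / (lam (T0 + 1)) ^ 2)
    (hT0b : ∀ t, T0 < t → K - 1 / (lam (t + 1)) ^ 2 < 0)
    (T : ℕ) :
    ∑ t ∈ Icc 1 T, (K - 1 / (lam (t + 1)) ^ 2) * lam (t + 1) * α t ≤
        K * ∑ t ∈ Icc 1 T0, lam (t + 1) * α t ∧
    K * ∑ t ∈ Icc 1 T0, lam (t + 1) * α t ≤ 2 * K * γ ^ 2 / lam (T0 + 1) ∧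
    2 * K * γ ^ 2 / lam (T0 + 1) ≤ 2 * K * γ ^ 2 * Real.sqrt K := by
  have hSpos : ∀ m : ℕ, (0:ℝ) < G + ∑ s ∈ Icc 1 m, α s := fun m => by
    have : (0:ℝ) ≤ ∑ s ∈ Icc 1 m, α s := Finset.sum_nonneg fun i _ => hα i
    linarith
  have hlampos : ∀ t, 0 < lam t := fun t => by
    rw [hlam t]
    exact div_pos hγ (Real.sqrt_pos.mpr (hSpos _))
  have hlam' : ∀ t : ℕ, lam (t + 1) = γ / Real.sqrt (G + ∑ s ∈ Icc 1 t, α s) := fun t => by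
    rw [hlam (t+1)]; norm_num
  -- Part 1
  have part1 : ∑ t ∈ Icc 1 T, (K - 1 / (lam (t + 1)) ^ 2) * lam (t + 1) * α t ≤
      K * ∑ t ∈ Icc 1 T0, lam (t + 1) * α t := by
    rw [Finset.mul_sum]
    have hterm_le : ∀ t : ℕ, (K - 1 / (lam (t + 1)) ^ 2) * lam (t + 1) * α t ≤
        K * (lam (t + 1) * α t) := fun t => by
      have h1 : K - 1 / (lam (t + 1)) ^ 2 ≤ K := by
        have : (0:ℝ) ≤ 1 / (lam (t + 1)) ^ 2 := by positivity
        linarith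
      have h2 : 0 ≤ lam (t+1) * α t := mul_nonneg (hlampos _).le (hα t)
      nlinarith
    rcases le_or_gt T T0 with h | h
    · calc ∑ t ∈ Icc 1 T, (K - 1 / (lam (t + 1)) ^ 2) * lam (t + 1) * α t
          ≤ ∑ t ∈ Icc 1 T, K * (lam (t + 1) * α t) :=
            Finset.sum_le_sum fun t _ => hterm_le t
        _ ≤ ∑ t ∈ Icc 1 T0, K * (lam (t + 1) * α t) := by
            apply Finset.sum_le_sum_of_subset_of_nonneg
            · exact Finset.Icc_subset_Icc_right h
            · intro i _ _
              exact mul_nonneg hK.le (mul_nonneg (hlampos _).le (hα i))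
    · have hsplit : Icc 1 T = Icc 1 T0 ∪ Icc (T0+1) T := by
        ext x; simp only [Finset.mem_Icc, Finset.mem_union]; omega
      rw [hsplit, Finset.sum_union (by
        apply Finset.disjoint_left.mpr
        intro x hx hx'
        simp only [Finset.mem_Icc] at hx hx'
        omega)]
      have h1 : ∑ t ∈ Icc 1 T0, (K - 1 / (lam (t + 1)) ^ 2) * lam (t + 1) * α t
          ≤ ∑ t ∈ Icc 1 T0, K * (lam (t + 1) * α t) :=
        Finset.sum_le_sum fun t _ => hterm_le t
      have h2 : ∑ t ∈ Icc (T0+1) T, (K - 1 / (lam (t + 1)) ^ 2) * lam (t + 1) * α t ≤ 0 := by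
        apply Finset.sum_nonpos
        intro t ht
        simp only [Finset.mem_Icc] at ht
        have := hT0b t (by omega)
        have := mul_nonneg (hlampos (t+1)).le (hα t)
        nlinarith
      linarith
  refine ⟨part1, ?_, ?_⟩
  · -- Part 2
    have hkey := stmt15_key α hα G hG T0
    have heq : ∀ t : ℕ, lam (t + 1) * α t = γ * (α t / Real.sqrt (G + ∑ s ∈ Icc 1 t, α s)) := by
      intro t; rw [hlam' t]; ring
    have hlamT0 : γ / lam (T0 + 1) = Real.sqrt (G + ∑ s ∈ Icc 1 T0, α s) := by
      rw [hlam' T0]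
      rw [div_div_eq_mul_div, mul_comm, mul_div_assoc, div_self hγ.ne', mul_one]
    calc K * ∑ t ∈ Icc 1 T0, lam (t + 1) * α t
        = K * γ * ∑ t ∈ Icc 1 T0, α t / Real.sqrt (G + ∑ s ∈ Icc 1 t, α s) := by
          simp_rw [heq]; rw [← Finset.mul_sum]; ring
      _ ≤ K * γ * (2 * Real.sqrt (G + ∑ s ∈ Icc 1 T0, α s)) := by
          apply mul_le_mul_of_nonneg_left hkey (by positivity)
      _ = 2 * K * γ ^ 2 / lam (T0 + 1) := by
          rw [← hlamT0]; field_simp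
  · -- Part 3
    have hlp := hlampos (T0 + 1)
    have hinv : 1 / lam (T0 + 1) ≤ Real.sqrt K := by
      rw [show Real.sqrt K = Real.sqrt K from rfl]
      have h1 : (1 / lam (T0 + 1)) ^ 2 ≤ K := by
        rw [div_pow, one_pow]; linarith
      have h0 : 0 ≤ 1 / lam (T0 + 1) := by positivity
      nlinarith [Real.sq_sqrt hK.le, Real.sqrt_nonneg K]
    calc 2 * K * γ ^ 2 / lam (T0 + 1) = 2 * K * γ ^ 2 * (1 / lam (T0 + 1)) := by ring
      _ ≤ 2 * K * γ ^ 2 * Real.sqrt K :=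
          mul_le_mul_of_nonneg_left hinv (by positivity)
end

section
/- Let C be a nonempty closed convex compact subset of R^d, f : R^d -> R convex and differentiable, and x* = argmin over C of f. Suppose points x_{t+1/2} in C, weights a_t = t^2, b_t = t^p (p >= 2), averages xbar_{t+1/2} defined by the b_t-weighted averaging, satisfy the regret bound sum_{t=1}^T a_t <grad f(xbar_{t+1/2}), x_{t+1/2} - x*> <= C_0 + C_1 * T^{3/2} + C_2 * T^{5/2} for all T, with constants C_0, C_1, C_2 >= 0. Then f(xbar_{T+1/2}) - f(x*) <= (p+1) * (C_0 / T^3 + C_1 / T^{3/2} + C_2 / sqrt(T)). -/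
/-!
Write `δ_t = f(x̄_t) - f(x*) ≥ 0` and `B_t = ∑_{s ≤ t} s^p`. Since
`B_t x̄_t = B_{t-1} x̄_{t-1} + t^p x_t`, the gradient inequality at `x̄_t` gives the anytime
online-to-batch step `B_t δ_t ≤ B_{t-1} δ_{t-1} + t^p ⟪∇f(x̄_t), x_t - x*⟫`. Multiplying by the
nonincreasing ratio `a_t / b_t = t^(2-p)` and using `δ ≥ 0`, these steps telescope to
`T^(2-p) B_T δ_T ≤ ∑_{t ≤ T} t^2 ⟪∇f(x̄_t), x_t - x*⟫`, and `B_T ≥ ∫_0^T s^p ds = T^(p+1)/(p+1)`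
turns the left side into at least `T^3 δ_T / (p+1)`.
-/

open Finset RealInnerProductSpace

theorem Finset.sum_smul_centerMass {R E ι : Type*} [Field R] [LinearOrder R]
    [IsStrictOrderedRing R] [AddCommGroup E] [Module R E] {t : Finset ι} {w : ι → R}
    (hw : ∀ i ∈ t, 0 ≤ w i) (z : ι → E) :
    (∑ i ∈ t, w i) • t.centerMass w z = ∑ i ∈ t, w i • z i := by
  by_cases h : ∑ i ∈ t, w i = 0
  · rw [h, zero_smul, eq_comm]
    exact sum_eq_zero fun i hi => by rw [(sum_eq_zero_iff_of_nonneg hw).1 h i hi, zero_smul]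
  · exact smul_inv_smul₀ h _

theorem mul_le_sum_Icc_mul_of_le_add {Φ ρ c : ℕ → ℝ} (hΦ0 : Φ 0 = 0) (hΦ : ∀ t, 0 ≤ Φ t)
    (hρ : AntitoneOn ρ (Set.Ici 1)) (hρ0 : ∀ t, 0 ≤ ρ t)
    (hstep : ∀ t, Φ (t + 1) ≤ Φ t + c (t + 1)) (T : ℕ) :
    ρ T * Φ T ≤ ∑ t ∈ Icc 1 T, ρ t * c t := by
  induction T with
  | zero => simp [hΦ0]
  | succ n ih =>
    have hdecay : ρ (n + 1) * Φ n ≤ ρ n * Φ n := by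
      rcases Nat.eq_zero_or_pos n with rfl | hn
      · simp [hΦ0]
      · exact mul_le_mul_of_nonneg_right (hρ (Set.mem_Ici.2 hn) (Set.mem_Ici.2 (by omega))
          (Nat.le_succ n)) (hΦ n)
    rw [sum_Icc_succ_top (by omega)]
    nlinarith [mul_le_mul_of_nonneg_left (hstep n) (hρ0 (n + 1))]

theorem rpow_add_one_div_le_sum_Icc_rpow {p : ℝ} (hp : 0 ≤ p) (T : ℕ) :
    (T : ℝ) ^ (p + 1) / (p + 1) ≤ ∑ s ∈ Icc 1 T, (s : ℝ) ^ p := by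
  have hmono : MonotoneOn (fun x : ℝ => x ^ p) (Set.Icc 0 (0 + T)) :=
    fun u hu v _ huv => Real.rpow_le_rpow hu.1 huv hp
  have hint : ∫ x in (0 : ℝ)..(0 + T), x ^ p = (T : ℝ) ^ (p + 1) / (p + 1) := by
    rw [integral_rpow (Or.inl (by linarith)), Real.zero_rpow (by linarith)]
    simp
  rw [← hint, ← Ico_add_one_right_eq_Icc, sum_Ico_eq_sum_range]
  simpa [add_comm] using hmono.integral_le_sum

theorem pow_three_div_le_rpow_mul_sum_Icc_rpow {p : ℝ} (hp : 0 ≤ p) {T : ℕ} (hT : 1 ≤ T) :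
    (T : ℝ) ^ 3 / (p + 1) ≤ (T : ℝ) ^ (2 - p) * ∑ s ∈ Icc 1 T, (s : ℝ) ^ p := by
  have hTpos : (0 : ℝ) < T := by exact_mod_cast hT
  calc (T : ℝ) ^ 3 / (p + 1) = (T : ℝ) ^ (2 - p) * ((T : ℝ) ^ (p + 1) / (p + 1)) := by
        rw [mul_div_assoc', ← Real.rpow_add hTpos, ← Real.rpow_natCast]; ring_nf
    _ ≤ _ := mul_le_mul_of_nonneg_left (rpow_add_one_div_le_sum_Icc_rpow hp T) (by positivity)

theorem add_mul_rpow_div_pow_three {T : ℝ} (hT : 0 < T) (C₀ C₁ C₂ : ℝ) :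
    (C₀ + C₁ * T ^ ((3 : ℝ) / 2) + C₂ * T ^ ((5 : ℝ) / 2)) / T ^ 3 =
      C₀ / T ^ 3 + C₁ / T ^ ((3 : ℝ) / 2) + C₂ / Real.sqrt T := by
  have h₁ : T ^ 3 = T ^ ((3 : ℝ) / 2) * T ^ ((3 : ℝ) / 2) := by
    rw [← Real.rpow_add hT, ← Real.rpow_natCast]; norm_num
  have h₂ : T ^ 3 = T ^ ((5 : ℝ) / 2) * Real.sqrt T := by
    rw [Real.sqrt_eq_rpow, ← Real.rpow_add hT, ← Real.rpow_natCast]; norm_num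
  have : 0 < T ^ ((3 : ℝ) / 2) := by positivity
  have : 0 < T ^ ((5 : ℝ) / 2) := by positivity
  have : 0 < Real.sqrt T := Real.sqrt_pos.2 hT
  rw [add_div, add_div]
  congr 1; congr 1
  · rw [h₁]; field_simp
  · rw [h₂]; field_simp

theorem ConvexOn.hasFDerivAt_apply_sub_le {E : Type*} [NormedAddCommGroup E] [NormedSpace ℝ E]
    {f : E → ℝ} {f' : E →L[ℝ] ℝ} {a : E} (hf : ConvexOn ℝ Set.univ f) (hd : HasFDerivAt f f' a)
    (b : E) : f' (b - a) ≤ f b - f a := by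
  have hline : HasDerivAt (AffineMap.lineMap a b) (b - a) (0 : ℝ) :=
    AffineMap.hasDerivAt_lineMap
  have hg : HasDerivAt (f ∘ AffineMap.lineMap (k := ℝ) a b) (f' (b - a)) 0 := by
    refine HasFDerivAt.comp_hasDerivAt (0 : ℝ) ?_ hline
    simpa using hd
  have hgconv : ConvexOn ℝ Set.univ (f ∘ AffineMap.lineMap (k := ℝ) a b) :=
    hf.comp_affineMap (AffineMap.lineMap a b)
  simpa [slope_def_field] using
    hgconv.le_slope_of_hasDerivAt (Set.mem_univ 0) (Set.mem_univ 1) one_pos hg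

section Gradient

variable {F : Type*} [NormedAddCommGroup F] [InnerProductSpace ℝ F] [CompleteSpace F] {f : F → ℝ}

theorem ConvexOn.inner_gradient_le_sub (hf : ConvexOn ℝ Set.univ f) {a : F}
    (hd : DifferentiableAt ℝ f a) (b : F) : ⟪gradient f a, b - a⟫ ≤ f b - f a := by
  simpa using hf.hasFDerivAt_apply_sub_le (hasGradientAt_iff_hasFDerivAt.1 hd.hasGradientAt) b

theorem ConvexOn.mul_sub_le_mul_sub_add_mul_inner_gradient (hf : ConvexOn ℝ Set.univ f)
    {y' : F} (hd : DifferentiableAt ℝ f y') {W w : ℝ} (hW : 0 ≤ W) (hw : 0 ≤ w) {y x u : F}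
    (hy' : (W + w) • y' = W • y + w • x) :
    (W + w) * (f y' - f u) ≤ W * (f y - f u) + w * ⟪gradient f y', x - u⟫ := by
  set g := gradient f y'
  have hy : ⟪g, y - y'⟫ ≤ f y - f y' := hf.inner_gradient_le_sub hd y
  have hu : ⟪g, u - y'⟫ ≤ f u - f y' := hf.inner_gradient_le_sub hd u
  have hmean : (W + w) * ⟪g, y'⟫ = W * ⟪g, y⟫ + w * ⟪g, x⟫ := by
    simpa only [inner_add_right, real_inner_smul_right] using congrArg (⟪g, ·⟫) hy'
  simp only [inner_sub_right] at hy hu ⊢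
  nlinarith [mul_le_mul_of_nonneg_left hy hW, mul_le_mul_of_nonneg_left hu hw]

theorem ConvexOn.anytime_online_to_batch (hf : ConvexOn ℝ Set.univ f) (hd : Differentiable ℝ f)
    {w ρ : ℕ → ℝ} (hw : ∀ t, 0 ≤ w t) (hρ : AntitoneOn ρ (Set.Ici 1)) (hρ0 : ∀ t, 0 ≤ ρ t)
    (x : ℕ → F) (u : F) (hu : ∀ t, 1 ≤ t → f u ≤ f ((Icc 1 t).centerMass w x)) (T : ℕ) :
    ρ T * ((∑ t ∈ Icc 1 T, w t) * (f ((Icc 1 T).centerMass w x) - f u)) ≤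
      ∑ t ∈ Icc 1 T, ρ t * (w t * ⟪gradient f ((Icc 1 t).centerMass w x), x t - u⟫) := by
  refine mul_le_sum_Icc_mul_of_le_add
    (Φ := fun t => (∑ s ∈ Icc 1 t, w s) * (f ((Icc 1 t).centerMass w x) - f u))
    (by simp) (fun t => ?_) hρ hρ0 (fun t => ?_) T
  · rcases Nat.eq_zero_or_pos t with rfl | ht
    · simp
    · exact mul_nonneg (sum_nonneg fun s _ => hw s) (sub_nonneg.2 (hu t ht))
  · have hW := sum_Icc_succ_top (Nat.le_add_left 1 t) w
    rw [hW]
    refine hf.mul_sub_le_mul_sub_add_mul_inner_gradient (hd _) (sum_nonneg fun s _ => hw s)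
      (hw _) ?_
    rw [← hW, sum_smul_centerMass (fun s _ => hw s), sum_smul_centerMass (fun s _ => hw s),
      sum_Icc_succ_top (Nat.le_add_left 1 t)]

end Gradient

theorem stmt19_general (d : ℕ) (K : Set (EuclideanSpace ℝ (Fin d)))
    (hKconv : Convex ℝ K)
    (f : EuclideanSpace ℝ (Fin d) → ℝ)
    (hconv : ConvexOn ℝ Set.univ f) (hdiff : Differentiable ℝ f)
    (xstar : EuclideanSpace ℝ (Fin d))
    (hmin : ∀ y ∈ K, f xstar ≤ f y)
    (p : ℝ) (hp : 2 ≤ p)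
    (x : ℕ → EuclideanSpace ℝ (Fin d)) (hx : ∀ t, x t ∈ K)
    (B : ℕ → ℝ) (hB : ∀ t, B t = ∑ s ∈ Icc 1 t, (s : ℝ) ^ p)
    (xbar : ℕ → EuclideanSpace ℝ (Fin d))
    (hxbar : ∀ t, xbar t = (B t)⁻¹ • ∑ s ∈ Icc 1 t, (s : ℝ) ^ p • x s)
    (C0 C1 C2 : ℝ)
    (hreg : ∀ T : ℕ, 1 ≤ T →
      ∑ t ∈ Icc 1 T, (t : ℝ) ^ 2 * ⟪gradient f (xbar t), x t - xstar⟫ ≤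
        C0 + C1 * (T : ℝ) ^ ((3 : ℝ) / 2) + C2 * (T : ℝ) ^ ((5 : ℝ) / 2))
    (T : ℕ) (hT : 1 ≤ T) :
    f (xbar T) - f xstar ≤
      (p + 1) * (C0 / (T : ℝ) ^ 3 + C1 / (T : ℝ) ^ ((3 : ℝ) / 2) + C2 / Real.sqrt T) := by
  have hTpos : (0 : ℝ) < T := by exact_mod_cast hT
  have hcm : ∀ t, (Icc 1 t).centerMass (fun s : ℕ => (s : ℝ) ^ p) x = xbar t := fun t => by
    rw [hxbar, hB]; rfl
  have hgap : ∀ t, 1 ≤ t → f xstar ≤ f ((Icc 1 t).centerMass (fun s : ℕ => (s : ℝ) ^ p) x) :=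
    fun t ht => hmin _ <| hKconv.centerMass_mem (fun s _ => by positivity)
      (sum_pos (fun s hs => by have := (mem_Icc.1 hs).1; positivity) (nonempty_Icc.2 ht))
      (fun s _ => hx s)
  have hdecay : AntitoneOn (fun t : ℕ => (t : ℝ) ^ (2 - p)) (Set.Ici 1) :=
    fun s hs t _ hst => Real.rpow_le_rpow_of_nonpos (by exact_mod_cast hs)
      (by exact_mod_cast hst) (by linarith)
  have hbatch := hconv.anytime_online_to_batch hdiff (fun t => by positivity) hdecay
    (fun t => by positivity) x xstar hgap T
  simp only [hcm, ← hB, ← mul_assoc] at hbatch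
  have hweights : ∀ t ∈ Icc 1 T, (t : ℝ) ^ (2 - p) * (t : ℝ) ^ p = (t : ℝ) ^ 2 := fun t ht => by
    rw [← Real.rpow_add (by have := (mem_Icc.1 ht).1; positivity)]; norm_num
  rw [sum_congr rfl fun t ht => by rw [hweights t ht]] at hbatch
  have hlower := hB T ▸ pow_three_div_le_rpow_mul_sum_Icc_rpow (by linarith : (0 : ℝ) ≤ p) hT
  have hgapT := sub_nonneg.2 (hcm T ▸ hgap T hT)
  rw [← add_mul_rpow_div_pow_three hTpos, mul_div_assoc', le_div_iff₀ (by positivity)]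
  calc (f (xbar T) - f xstar) * (T : ℝ) ^ 3
      = (p + 1) * ((T : ℝ) ^ 3 / (p + 1) * (f (xbar T) - f xstar)) := by field_simp
    _ ≤ (p + 1) * ((T : ℝ) ^ (2 - p) * B T * (f (xbar T) - f xstar)) := by gcongr
    _ ≤ _ := by gcongr; exact hbatch.trans (hreg T hT)

theorem stmt19 (d : ℕ) (K : Set (EuclideanSpace ℝ (Fin d)))
    (hKconv : Convex ℝ K) (hKcl : IsClosed K) (hKcpt : IsCompact K) (hKne : K.Nonempty)
    (f : EuclideanSpace ℝ (Fin d) → ℝ)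
    (hconv : ConvexOn ℝ Set.univ f) (hdiff : Differentiable ℝ f)
    (xstar : EuclideanSpace ℝ (Fin d)) (hxstar : xstar ∈ K)
    (hmin : ∀ y ∈ K, f xstar ≤ f y)
    (p : ℝ) (hp : 2 ≤ p)
    (x : ℕ → EuclideanSpace ℝ (Fin d)) (hx : ∀ t, x t ∈ K)
    (B : ℕ → ℝ) (hB : ∀ t, B t = ∑ s ∈ Icc 1 t, (s : ℝ) ^ p)
    (xbar : ℕ → EuclideanSpace ℝ (Fin d))
    (hxbar : ∀ t, xbar t = (B t)⁻¹ • ∑ s ∈ Icc 1 t, (s : ℝ) ^ p • x s)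
    (C0 C1 C2 : ℝ) (hC0 : 0 ≤ C0) (hC1 : 0 ≤ C1) (hC2 : 0 ≤ C2)
    (hreg : ∀ T : ℕ, 1 ≤ T →
      ∑ t ∈ Icc 1 T, (t : ℝ) ^ 2 * ⟪gradient f (xbar t), x t - xstar⟫ ≤
        C0 + C1 * (T : ℝ) ^ ((3 : ℝ) / 2) + C2 * (T : ℝ) ^ ((5 : ℝ) / 2))
    (T : ℕ) (hT : 1 ≤ T) :
    f (xbar T) - f xstar ≤
      (p + 1) * (C0 / (T : ℝ) ^ 3 + C1 / (T : ℝ) ^ ((3 : ℝ) / 2) + C2 / Real.sqrt T) :=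
  stmt19_general d K hKconv f hconv hdiff xstar hmin p hp x hx B hB xbar hxbar C0 C1 C2 hreg T hT
end
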